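/- arXiv:math/0206063 — 6 statements merged into one kernel-verified Lean document; each statement's English description precedes it below -/
import Mathlib

section
/- Let B ⊆ ℕ^[n] be a set of monomials in y_1,...,y_n that is shifted, meaning: if j < i and y_i·m ∈ B then y_j·m ∈ B. If m·ℕ^σ ⊆ B is an admissible pair (m a monomial with support disjoint from σ) that is maximal among admissible pairs contained in B, then σ = [k] where k = max(σ), i.e., σ is an initial interval {1,...,k}. -/
/-- A monomial in variables `y_i` (`i : ℕ`), identified with its exponent vector. -/
abbrev Mono : Type := ℕ →₀ ℕ

/-- Total degree of a monomial. -/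
def mdeg (m : Mono) : ℕ := m.sum fun _ e => e

/-- The set of monomials `m·ℕ^σ`, i.e. products of `m` with monomials supported on `σ`. -/
def pairSet (m : Mono) (σ : Finset ℕ) : Set Mono :=
  { x | ∃ t : Mono, t.support ⊆ σ ∧ x = m + t }

/-- `m·ℕ^σ` is an admissible pair of (the complement of) `B`:
`supp m ∩ σ = ∅` and `m·ℕ^σ ⊆ B`. -/
def Admissible (B : Set Mono) (m : Mono) (σ : Finset ℕ) : Prop :=
  Disjoint m.support σ ∧ pairSet m σ ⊆ B

/-- A standard pair: an inclusion-maximal admissible pair. -/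
def IsStandardPair (B : Set Mono) (m : Mono) (σ : Finset ℕ) : Prop :=
  Admissible B m σ ∧
    ∀ (m' : Mono) (σ' : Finset ℕ), Admissible B m' σ' →
      pairSet m σ ⊆ pairSet m' σ' → pairSet m σ = pairSet m' σ'

/-- `B` is shifted: if `1 ≤ j < i` and `y_i·m ∈ B` then `y_j·m ∈ B`. -/
def ShiftedSet (B : Set Mono) : Prop :=
  ∀ (m : Mono) (i j : ℕ), 1 ≤ j → j < i →
    m + Finsupp.single i 1 ∈ B → m + Finsupp.single j 1 ∈ B

/-- `B` is an order ideal of monomials: closed under divisibility. -/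
def IsOrderIdeal (B : Set Mono) : Prop := ∀ m ∈ B, ∀ m' : Mono, m' ≤ m → m' ∈ B

/-- All monomials of `B` involve only the variables `y_1, ..., y_n`. -/
def SupportedIn (B : Set Mono) (n : ℕ) : Prop := ∀ m ∈ B, m.support ⊆ Finset.Icc 1 n

/-- `m·ℕ^{i} ⊆ B`: all products of `m` with powers of `y_i` lie in `B`
(for `i = 0` this just means `m ∈ B`, the convention `ℕ^{∅} = {1}`). -/
def VarTower (B : Set Mono) (m : Mono) (i : ℕ) : Prop :=
  if i = 0 then m ∈ B else ∀ t : ℕ, m + Finsupp.single i t ∈ B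

/-- `A_i(B) = { m ∈ ℕ^[i+1,n] : m·ℕ^{i} ⊆ B, m·ℕ^{i+1} ⊄ B }`. -/
def Aset (B : Set Mono) (n i : ℕ) : Set Mono :=
  { m | m.support ⊆ Finset.Icc (i + 1) n ∧ VarTower B m i ∧ ¬ VarTower B m (i + 1) }

/-- Property (B4): if `m ∈ B ∩ ℕ^[k,n]` has degree `≥ k` then `m·ℕ^{k} ⊆ B`. -/
def HasB4 (B : Set Mono) (n : ℕ) : Prop :=
  ∀ (k : ℕ) (m : Mono), 1 ≤ k → m ∈ B → m.support ⊆ Finset.Icc k n → k ≤ mdeg m →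
    ∀ t : ℕ, m + Finsupp.single k t ∈ B

theorem Finset.eq_Icc_one_card_of_forall_lt_mem {σ : Finset ℕ} (hpos : ∀ i ∈ σ, 1 ≤ i)
    (hdown : ∀ i ∈ σ, ∀ j, 1 ≤ j → j < i → j ∈ σ) : σ = Finset.Icc 1 σ.card := by
  have hle : ∀ i ∈ σ, i ≤ σ.card := fun i hi => by
    have hIcc : Finset.Icc 1 i ⊆ σ := fun j hj => by
      obtain ⟨hj₁, hj₂⟩ := Finset.mem_Icc.mp hj
      rcases hj₂.lt_or_eq with hlt | rfl
      · exact hdown i hi j hj₁ hlt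
      · exact hi
    simpa using Finset.card_le_card hIcc
  refine Finset.eq_of_subset_of_card_le (fun i hi => Finset.mem_Icc.mpr ⟨hpos i hi, hle i hi⟩) ?_
  simp

section

variable {B : Set Mono} {m u : Mono} {σ : Finset ℕ} {i j : ℕ}

theorem ShiftedSet.add_single_mem_of_lt (hB : ShiftedSet B) (hj : 1 ≤ j) (hji : j < i) (c : ℕ) :
    u + Finsupp.single i c ∈ B → u + Finsupp.single j c ∈ B := by
  induction c generalizing u with
  | zero => simp
  | succ c ih =>
    intro hu
    have hi : (u + Finsupp.single i 1) + Finsupp.single i c ∈ B := by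
      rwa [add_assoc, ← Finsupp.single_add, add_comm 1 c]
    have hj' : (u + Finsupp.single j c) + Finsupp.single i 1 ∈ B := by
      rw [add_right_comm]; exact ih hi
    simpa only [add_assoc, ← Finsupp.single_add] using hB _ i j hj hji hj'

theorem IsOrderIdeal.pairSet_subset_of_le (hB : IsOrderIdeal B) (hsub : pairSet m σ ⊆ B)
    {m' : Mono} (hm' : m' ≤ m) : pairSet m' σ ⊆ B := by
  rintro _ ⟨t, ht, rfl⟩
  exact hB _ (hsub ⟨t, ht, rfl⟩) _ (add_le_add_left hm' t)

/-- Shiftedness moves the `y_i`-part of `t` onto `y_j`, turning any `t ∈ ℕ^{σ ∪ {j}}`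
into one supported on `σ`. -/
theorem ShiftedSet.pairSet_insert_subset (hB : ShiftedSet B) (hsub : pairSet u σ ⊆ B)
    (hi : i ∈ σ) (hj : 1 ≤ j) (hji : j < i) : pairSet u (insert j σ) ⊆ B := by
  rintro _ ⟨t, ht, rfl⟩
  have hte : (t.erase j).support ⊆ σ := by
    rw [Finsupp.support_erase]
    exact (Finset.erase_subset_erase j ht).trans (Finset.erase_insert_subset j σ)
  have hsingle : (Finsupp.single i (t j)).support ⊆ σ :=
    Finsupp.support_single_subset.trans (Finset.singleton_subset_iff.mpr hi)
  have hmem : (u + t.erase j) + Finsupp.single i (t j) ∈ B := by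
    rw [add_assoc]
    exact hsub ⟨_, Finsupp.support_add.trans (Finset.union_subset hte hsingle), rfl⟩
  have := hB.add_single_mem_of_lt hj hji (t j) hmem
  rwa [add_assoc, Finsupp.erase_add_single] at this

theorem pairSet_subset_pairSet_erase_insert (m : Mono) (σ : Finset ℕ) (j : ℕ) :
    pairSet m σ ⊆ pairSet (m.erase j) (insert j σ) := by
  rintro _ ⟨t, ht, rfl⟩
  refine ⟨Finsupp.single j (m j) + t, Finsupp.support_add.trans (Finset.union_subset ?_ ?_), ?_⟩
  · exact Finsupp.support_single_subset.trans (by simp)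
  · exact ht.trans (Finset.subset_insert j σ)
  · rw [← add_assoc, Finsupp.erase_add_single]

theorem apply_eq_of_mem_pairSet {x : Mono} (hx : x ∈ pairSet m σ) (hj : j ∉ σ) : x j = m j := by
  obtain ⟨t, ht, rfl⟩ := hx
  have : t j = 0 := Finsupp.notMem_support_iff.mp fun h => hj (ht h)
  simp [this]

theorem Admissible.one_le_of_mem {n : ℕ} (hB : SupportedIn B n) (h : Admissible B m σ)
    (hi : i ∈ σ) : 1 ≤ i := by
  have hmem : m + Finsupp.single i 1 ∈ B :=
    h.2 ⟨_, Finsupp.support_single_subset.trans (Finset.singleton_subset_iff.mpr hi), rfl⟩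
  have : i ∈ (m + Finsupp.single i 1).support := by simp
  exact (Finset.mem_Icc.mp (hB _ hmem this)).1

/-- If `j ∉ σ`, then `(m / y_j^{m_j})·ℕ^{σ ∪ {j}}` is an admissible pair strictly containing
`m·ℕ^σ`. -/
theorem IsStandardPair.mem_of_lt (hB₁ : ShiftedSet B) (hB₂ : IsOrderIdeal B)
    (h : IsStandardPair B m σ) (hi : i ∈ σ) (hj : 1 ≤ j) (hji : j < i) : j ∈ σ := by
  obtain ⟨⟨hdisj, hsub⟩, hmax⟩ := h
  by_contra hjσ
  have hadm : Admissible B (m.erase j) (insert j σ) := by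
    refine ⟨?_, hB₁.pairSet_insert_subset (hB₂.pairSet_subset_of_le hsub ?_) hi hj hji⟩
    · rw [Finsupp.support_erase, Finset.disjoint_insert_right]
      exact ⟨Finset.notMem_erase j _, Finset.disjoint_of_subset_left (Finset.erase_subset j _) hdisj⟩
    · exact fun k => by rw [Finsupp.erase_apply]; split_ifs <;> simp
  have heq := hmax _ _ hadm (pairSet_subset_pairSet_erase_insert m σ j)
  have hx : m.erase j + Finsupp.single j (m j + 1) ∈ pairSet (m.erase j) (insert j σ) :=
    ⟨_, Finsupp.support_single_subset.trans (by simp), rfl⟩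
  rw [← heq] at hx
  simpa using apply_eq_of_mem_pairSet hx hjσ

end

/-- Every standard pair of a shifted (downward closed) set of monomials has an
initial interval `[k] = {1,...,k}` (with `k = max σ`) as its submonoid part;
equivalently `σ = {1, ..., |σ|}`. -/
theorem standardPair_initial_interval
    (n : ℕ) (B : Set Mono) (h1 : ShiftedSet B) (h2 : IsOrderIdeal B)
    (h3 : SupportedIn B n) (m : Mono) (σ : Finset ℕ)
    (h : IsStandardPair B m σ) : σ = Finset.Icc 1 σ.card := by
  refine Finset.eq_Icc_one_card_of_forall_lt_mem (fun i hi => h.1.one_le_of_mem h3 hi) ?_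
  exact fun i hi j hj hji => h.mem_of_lt h1 h2 hi hj hji
end

section
/- Let B ⊆ ℕ^[n] be a shifted order ideal of monomials (closed under divisibility, and if j < i and y_i m ∈ B then y_j m ∈ B). For i ∈ [0,n], define A_i(B) = { m ∈ ℕ^[i+1,n] : m·ℕ^{i} ⊆ B and m·ℕ^{i+1} ⊄ B }. Then the standard pairs of the complement ideal (the inclusion-maximal sets m·ℕ^σ contained in B with supp(m) ∩ σ = ∅) are exactly the sets a·ℕ^[i] for a ∈ A_i(B), i ∈ [0,n]. -/
lemma self_mem_pairSet {m : Mono} {σ : Finset ℕ} : m ∈ pairSet m σ :=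
  ⟨0, by simp, by simp⟩

lemma mem_pairSet_iff {m : Mono} {σ : Finset ℕ} {x : Mono} :
    x ∈ pairSet m σ ↔ m ≤ x ∧ ∀ j ∉ σ, x j = m j := by
  constructor
  · rintro ⟨t, ht, rfl⟩
    refine ⟨le_add_right le_rfl, fun j hj => ?_⟩
    have : t j = 0 := Finsupp.notMem_support_iff.mp (fun hc => hj (ht hc))
    simp [this]
  · rintro ⟨hle, heq⟩
    refine ⟨x - m, fun j hj => ?_, (add_tsub_cancel_of_le hle).symm⟩
    by_contra hjσ
    rw [Finsupp.mem_support_iff, Finsupp.tsub_apply, heq j hjσ] at hj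
    omega

lemma moveAll {B : Set Mono} (h1 : ShiftedSet B) {j' j : ℕ} (hj' : 1 ≤ j') (hjj : j' < j) :
    ∀ (s : ℕ) (m0 : Mono), m0 + Finsupp.single j s ∈ B → m0 + Finsupp.single j' s ∈ B := by
  intro s
  induction s with
  | zero => intro m0 h; simpa using h
  | succ s ih =>
    intro m0 h
    have h' : (m0 + Finsupp.single j s) + Finsupp.single j 1 ∈ B := by
      rw [add_assoc, ← Finsupp.single_add]; exact h
    have h'' := h1 _ j j' hj' hjj h'
    have e : (m0 + Finsupp.single j s) + Finsupp.single j' 1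
        = (m0 + Finsupp.single j' 1) + Finsupp.single j s := by abel
    rw [e] at h''
    have := ih _ h''
    have e2 : (m0 + Finsupp.single j' 1) + Finsupp.single j' s
        = m0 + Finsupp.single j' (s + 1) := by
      rw [add_assoc, ← Finsupp.single_add, Nat.add_comm 1 s]
    rwa [e2] at this

lemma lower {B : Set Mono} (h1 : ShiftedSet B) {i : ℕ} (hi : 1 ≤ i) {a : Mono}
    (ha : ∀ s, a + Finsupp.single i s ∈ B) :
    ∀ (d : ℕ) (t : Mono), (∑ k ∈ Finset.range i, t k) ≤ d →
      t.support ⊆ Finset.Icc 1 i → a + t ∈ B := by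
  intro d
  induction d with
  | zero =>
    intro t hsum hsupp
    have hz : ∀ k, k ≠ i → t k = 0 := by
      intro k hk
      rcases lt_or_gt_of_ne hk with h | h
      · exact Finset.sum_eq_zero_iff.mp (Nat.le_zero.mp hsum) k (Finset.mem_range.mpr h)
      · by_contra hc
        have := Finset.mem_Icc.mp (hsupp (Finsupp.mem_support_iff.mpr hc))
        omega
    have ht : t = Finsupp.single i (t i) := by
      ext k
      rcases eq_or_ne k i with rfl | h
      · simp
      · rw [hz k h, Finsupp.single_eq_of_ne' (fun hc => h hc.symm)]
    rw [ht]; exact ha _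
  | succ d ih =>
    intro t hsum hsupp
    by_cases h0 : (∑ k ∈ Finset.range i, t k) = 0
    · exact ih t (by omega) hsupp
    · obtain ⟨j, hjr, hj0⟩ : ∃ j ∈ Finset.range i, t j ≠ 0 := by
        by_contra hc
        push_neg at hc
        exact h0 (Finset.sum_eq_zero hc)
      have hj1 : 1 ≤ j := (Finset.mem_Icc.mp (hsupp (Finsupp.mem_support_iff.mpr hj0))).1
      have hji : j < i := Finset.mem_range.mp hjr
      set t1 : Mono := t - Finsupp.single j 1 with ht1def
      have hle : Finsupp.single j 1 ≤ t := by
        rw [Finsupp.single_le_iff]; omega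
      have ht1 : t1 + Finsupp.single j 1 = t := tsub_add_cancel_of_le hle
      have ht1sub : t1.support ⊆ t.support := Finsupp.support_tsub
      have hsupp' : (t1 + Finsupp.single i 1).support ⊆ Finset.Icc 1 i := by
        intro k hk
        rcases Finset.mem_union.mp (Finsupp.support_add hk) with h | h
        · exact hsupp (ht1sub h)
        · have := Finsupp.support_single_subset h
          simp only [Finset.mem_singleton] at this
          subst this
          simp [Finset.mem_Icc]; omega
      have hsingle : ∀ (c : ℕ) (hc : c ∈ Finset.range i) (hcj : c ≠ j),
          Finsupp.single j 1 c = 0 := fun c _ hcj => Finsupp.single_eq_of_ne' (Ne.symm hcj)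
      have e2 : (∑ k ∈ Finset.range i, t k) = (∑ k ∈ Finset.range i, t1 k) + 1 := by
        conv_lhs => rw [← ht1]
        simp only [Finsupp.coe_add, Pi.add_apply, Finset.sum_add_distrib]
        congr 1
        rw [Finset.sum_eq_single_of_mem j hjr hsingle]
        simp
      have e1 : (∑ k ∈ Finset.range i, (t1 + Finsupp.single i 1 : Mono) k)
          = ∑ k ∈ Finset.range i, t1 k := by
        apply Finset.sum_congr rfl
        intro k hk
        have hz : Finsupp.single i 1 k = 0 :=
          Finsupp.single_eq_of_ne' (by have := Finset.mem_range.mp hk; omega)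
        simp [hz]
      have hB' : a + (t1 + Finsupp.single i 1) ∈ B :=
        ih _ (by rw [e1]; omega) hsupp'
      rw [← add_assoc] at hB'
      have := h1 (a + t1) i j hj1 hji hB'
      rwa [add_assoc, ht1] at this

lemma absorb {B : Set Mono} (h2 : IsOrderIdeal B) {m : Mono} {σ : Finset ℕ}
    (std : IsStandardPair B m σ) (j : ℕ)
    (hj : ∀ t : Mono, t.support ⊆ insert j σ → m + t ∈ B) : j ∈ σ := by
  by_contra hjσ
  set m2 : Mono := m.erase j with hm2def
  have hme : m2 + Finsupp.single j (m j) = m := Finsupp.erase_add_single j m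
  have hm2le : m2 ≤ m := by
    intro k
    rcases eq_or_ne k j with rfl | h
    · simp [hm2def, Finsupp.erase_same]
    · simp [hm2def, Finsupp.erase_ne h]
  have hadm : Admissible B m2 (insert j σ) := by
    constructor
    · rw [Finset.disjoint_left]
      intro k hk hk2
      rw [Finsupp.support_erase, Finset.mem_erase] at hk
      rcases Finset.mem_insert.mp hk2 with rfl | h
      · exact hk.1 rfl
      · exact Finset.disjoint_left.mp std.1.1 hk.2 h
    · rintro x ⟨t, ht, rfl⟩
      exact h2 _ (hj t ht) _ (add_le_add hm2le le_rfl)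
  have hincl : pairSet m σ ⊆ pairSet m2 (insert j σ) := by
    rintro x ⟨t, ht, rfl⟩
    refine ⟨Finsupp.single j (m j) + t, ?_, ?_⟩
    · intro k hk
      rcases Finset.mem_union.mp (Finsupp.support_add hk) with h | h
      · have := Finsupp.support_single_subset h
        simp only [Finset.mem_singleton] at this
        subst this; exact Finset.mem_insert_self _ _
      · exact Finset.mem_insert_of_mem (ht h)
    · rw [← add_assoc, hme]
  have heq := std.2 m2 (insert j σ) hadm hincl
  have hmem : m2 + Finsupp.single j (m j + 1) ∈ pairSet m σ := by
    rw [heq]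
    exact ⟨Finsupp.single j (m j + 1), by
      intro k hk
      have := Finsupp.support_single_subset hk
      simp only [Finset.mem_singleton] at this
      subst this; exact Finset.mem_insert_self _ _, rfl⟩
  have := (mem_pairSet_iff.mp hmem).2 j hjσ
  rw [Finsupp.add_apply, Finsupp.single_eq_same, hm2def, Finsupp.erase_same] at this
  omega

/-- The standard pairs of (the monomial ideal complementary to) a shifted order
ideal `B ⊆ ℕ^[n]` are exactly the pairs `a·ℕ^[i]` with `a ∈ A_i(B)`, `i ∈ [0,n]`. -/
theorem standardPairs_eq_Aset
    (n : ℕ) (B : Set Mono) (h1 : ShiftedSet B) (h2 : IsOrderIdeal B)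
    (h3 : SupportedIn B n) (m : Mono) (σ : Finset ℕ) :
    IsStandardPair B m σ ↔
      ∃ i ≤ n, σ = Finset.Icc 1 i ∧ m ∈ Aset B n i := by
  constructor
  · intro std
    obtain ⟨⟨hdisj, hsub⟩, hmax⟩ := std
    have hmB : m ∈ B := hsub self_mem_pairSet
    have hsing : ∀ j (s : ℕ), j ∈ σ → m + Finsupp.single j s ∈ B := by
      intro j s hj
      apply hsub
      refine ⟨Finsupp.single j s, ?_, rfl⟩
      intro k hk
      have := Finsupp.support_single_subset hk
      simp only [Finset.mem_singleton] at this
      subst this; exact hj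
    have hσn : σ ⊆ Finset.Icc 1 n := by
      intro j hj
      have hB : m + Finsupp.single j 1 ∈ B := hsing j 1 hj
      apply h3 _ hB
      rw [Finsupp.mem_support_iff, Finsupp.add_apply, Finsupp.single_eq_same]
      omega
    have hdown : ∀ j ∈ σ, ∀ j', 1 ≤ j' → j' < j → j' ∈ σ := by
      intro j hj j' hj'1 hj'j
      apply absorb h2 ⟨⟨hdisj, hsub⟩, hmax⟩
      intro t ht
      have hte : (t.erase j').support ⊆ σ := by
        intro k hk
        rw [Finsupp.support_erase, Finset.mem_erase] at hk
        rcases Finset.mem_insert.mp (ht hk.2) with h | h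
        · exact absurd h hk.1
        · exact h
      have hb : (m + t.erase j') + Finsupp.single j (t j') ∈ B := by
        rw [add_assoc]
        apply hsub
        refine ⟨t.erase j' + Finsupp.single j (t j'), ?_, rfl⟩
        intro k hk
        rcases Finset.mem_union.mp (Finsupp.support_add hk) with h | h
        · exact hte h
        · have := Finsupp.support_single_subset h
          simp only [Finset.mem_singleton] at this
          subst this; exact hj
      have := moveAll h1 hj'1 hj'j _ _ hb
      rwa [add_assoc, add_comm (t.erase j'), Finsupp.single_add_erase] at this
    obtain ⟨i, hin, hσi⟩ : ∃ i ≤ n, σ = Finset.Icc 1 i := by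
      rcases Finset.eq_empty_or_nonempty σ with h | h
      · exact ⟨0, Nat.zero_le n, by simp [h]⟩
      · refine ⟨σ.max' h, (Finset.mem_Icc.mp (hσn (σ.max'_mem h))).2, ?_⟩
        ext j
        simp only [Finset.mem_Icc]
        constructor
        · intro hj
          exact ⟨(Finset.mem_Icc.mp (hσn hj)).1, Finset.le_max' σ j hj⟩
        · rintro ⟨hj1, hj2⟩
          rcases eq_or_lt_of_le hj2 with h' | h'
          · exact h' ▸ σ.max'_mem h
          · exact hdown _ (σ.max'_mem h) j hj1 h'
    refine ⟨i, hin, hσi, ?_, ?_, ?_⟩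
    · intro k hk
      have h1k := Finset.mem_Icc.mp (h3 m hmB hk)
      have hkσ : k ∉ σ := fun hc => Finset.disjoint_left.mp hdisj hk hc
      rw [hσi, Finset.mem_Icc] at hkσ
      rw [Finset.mem_Icc]
      omega
    · unfold VarTower
      split
      · exact hmB
      · next h0 =>
        intro t
        exact hsing i t (by rw [hσi, Finset.mem_Icc]; omega)
    · intro hVT
      have hVT' : ∀ s, m + Finsupp.single (i + 1) s ∈ B := by
        unfold VarTower at hVT
        rw [if_neg (Nat.succ_ne_zero i)] at hVT
        exact hVT
      have : i + 1 ∈ σ := by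
        apply absorb h2 ⟨⟨hdisj, hsub⟩, hmax⟩
        intro t ht
        apply lower h1 (Nat.succ_le_succ (Nat.zero_le i)) hVT' _ t le_rfl
        intro k hk
        rcases Finset.mem_insert.mp (ht hk) with rfl | h
        · rw [Finset.mem_Icc]; omega
        · rw [hσi, Finset.mem_Icc] at h
          rw [Finset.mem_Icc]; omega
      rw [hσi, Finset.mem_Icc] at this
      omega
  · rintro ⟨i, hin, rfl, hsupp, hVT, hnVT⟩
    have htower : ∀ t : Mono, t.support ⊆ Finset.Icc 1 i → m + t ∈ B := by
      intro t ht
      rcases Nat.eq_zero_or_pos i with rfl | h0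
      · have ht0 : t = 0 := by
          ext k
          by_contra hc
          have := Finset.mem_Icc.mp (ht (Finsupp.mem_support_iff.mpr hc))
          omega
        rw [ht0, add_zero]
        unfold VarTower at hVT
        rwa [if_pos rfl] at hVT
      · have hVT' : ∀ s, m + Finsupp.single i s ∈ B := by
          unfold VarTower at hVT
          rwa [if_neg (by omega)] at hVT
        exact lower h1 h0 hVT' _ t le_rfl ht
    have hdisj : Disjoint m.support (Finset.Icc 1 i) := by
      rw [Finset.disjoint_left]
      intro k hk hks
      have h1k := Finset.mem_Icc.mp (hsupp hk)
      have h2k := Finset.mem_Icc.mp hks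
      omega
    refine ⟨⟨hdisj, by rintro x ⟨t, ht, rfl⟩; exact htower t ht⟩, ?_⟩
    intro m' σ' hadm hsubset
    obtain ⟨hd', hb'⟩ := hadm
    obtain ⟨hle, heqm⟩ := mem_pairSet_iff.mp (hsubset self_mem_pairSet)
    have hσ'1 : ∀ j ∈ σ', 1 ≤ j ∧ j ≤ n := by
      intro j hj
      have hB : m' + Finsupp.single j 1 ∈ B := by
        apply hb'
        refine ⟨Finsupp.single j 1, ?_, rfl⟩
        intro k hk
        have := Finsupp.support_single_subset hk
        simp only [Finset.mem_singleton] at this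
        subst this; exact hj
      have := Finset.mem_Icc.mp (h3 _ hB (by
        rw [Finsupp.mem_support_iff, Finsupp.add_apply, Finsupp.single_eq_same]
        omega))
      exact this
    have hdsub : (m - m').support ⊆ σ' := by
      intro k hk
      rw [Finsupp.mem_support_iff, Finsupp.tsub_apply] at hk
      by_contra hc
      rw [heqm k hc] at hk
      omega
    have hσ'i : ∀ j ∈ σ', j ≤ i := by
      intro j hj
      by_contra hgt
      push_neg at hgt
      apply hnVT
      unfold VarTower
      rw [if_neg (Nat.succ_ne_zero i)]
      intro s
      have hmem : m + Finsupp.single j s ∈ B := by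
        apply hb'
        refine ⟨(m - m') + Finsupp.single j s, ?_, ?_⟩
        · intro k hk
          rcases Finset.mem_union.mp (Finsupp.support_add hk) with h | h
          · exact hdsub h
          · have := Finsupp.support_single_subset h
            simp only [Finset.mem_singleton] at this
            subst this; exact hj
        · rw [← add_assoc, add_tsub_cancel_of_le hle]
      rcases eq_or_lt_of_le (Nat.succ_le_of_lt hgt) with h | h
      · obtain rfl : j = i + 1 := by omega
        exact hmem
      · exact moveAll h1 (Nat.succ_le_succ (Nat.zero_le i)) h s m hmem
    have hmm : m' = m := by
      have h0 : m - m' = 0 := by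
        ext k
        rw [Finsupp.coe_zero, Pi.zero_apply]
        by_contra hc
        have hk1 : k ∈ σ' := hdsub (Finsupp.mem_support_iff.mpr hc)
        have hk2 : k ∈ m.support := by
          rw [Finsupp.mem_support_iff]
          rw [Finsupp.tsub_apply] at hc
          omega
        have := Finset.mem_Icc.mp (hsupp hk2)
        have := hσ'i k hk1
        omega
      have := add_tsub_cancel_of_le hle
      rw [h0, add_zero] at this
      exact this
    subst hmm
    apply Set.Subset.antisymm hsubset
    rintro x ⟨t, ht, rfl⟩
    refine ⟨t, ?_, rfl⟩
    intro k hk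
    have h1k := (hσ'1 k (ht hk)).1
    have h2k := hσ'i k (ht hk)
    rw [Finset.mem_Icc]
    omega
end

section
/- Let B ⊆ ℕ^[n] be a shifted order ideal of monomials. For i ∈ [0,n] define A_i = { m ∈ ℕ^[i+1,n] : m·ℕ^{i} ⊆ B, m·ℕ^{i+1} ⊄ B } and C_i = (B ∖ ⋃_{j ≤ i} A_j) ∩ ℕ^[i+1,n]. Then C_i = { m ∈ B ∩ ℕ^[i+1,n] : m·ℕ^{i+1} ⊆ B }, and C_{i-1} is the disjoint union C_{i-1} = A_i ⊔ C_i ⊔ y_i·C_{i-1}. -/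
/-- `C_i = (B ∖ ⋃_{j ≤ i} A_j) ∩ ℕ^[i+1,n]`. -/
def Cset (B : Set Mono) (n i : ℕ) : Set Mono :=
  { m | m ∈ B ∧ m.support ⊆ Finset.Icc (i + 1) n ∧ ∀ j ≤ i, m ∉ Aset B n j }


/-!
Lowering the variable of a tower `m·ℕ^{i}` preserves it in a shifted set (shift `y_i ↦ y_j` one
factor at a time), so `m ∉ A_0 ∪ ⋯ ∪ A_j` unwinds, by induction on `j`, to `m·ℕ^{j+1} ⊆ B`.
Hence `C_{i-1}` consists of the `m ∈ ℕ^[i,n]` with `m·ℕ^{i} ⊆ B`. Such an `m` either avoids `y_i`,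
and then lies in `A_i` or in `C_i` according to whether `m·ℕ^{i+1} ⊆ B`, or is divisible by `y_i`,
and then `m / y_i ∈ C_{i-1}` because `B` is an order ideal. The three parts are disjoint since
only the last one involves `y_i`.
-/

open Finsupp

section Towers

variable {B : Set Mono} {m : Mono} {i j : ℕ}

theorem varTower_iff (hi : i ≠ 0) : VarTower B m i ↔ ∀ t : ℕ, m + single i t ∈ B := by
  rw [VarTower, if_neg hi]

theorem VarTower.mem (hi : i ≠ 0) (h : VarTower B m i) : m ∈ B := by
  simpa using (varTower_iff hi).mp h 0

theorem ShiftedSet.forall_add_single_mem (hsh : ShiftedSet B) (hj : 1 ≤ j) (hji : j < i)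
    (h : ∀ s : ℕ, m + single i s ∈ B) (t : ℕ) : m + single j t ∈ B := by
  suffices ∀ t s : ℕ, m + single j t + single i s ∈ B by simpa using this t 0
  intro t
  induction t with
  | zero => simpa using h
  | succ t ih =>
    intro s
    have hshift := hsh (m + single j t + single i s) i j hj hji
      (by simpa [single_add, add_assoc] using ih (s + 1))
    simpa [single_add, add_assoc, add_comm, add_left_comm] using hshift

theorem VarTower.of_le (hsh : ShiftedSet B) (hj : 1 ≤ j) (hji : j ≤ i) (h : VarTower B m i) :
    VarTower B m j := by
  rcases hji.eq_or_lt with rfl | hlt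
  · exact h
  rw [varTower_iff (by omega)] at h ⊢
  exact hsh.forall_add_single_mem hj hlt h

theorem varTower_single_add_iff (hoi : IsOrderIdeal B) (hi : i ≠ 0) :
    VarTower B (single i 1 + m) i ↔ VarTower B m i := by
  rw [varTower_iff hi, varTower_iff hi]
  refine ⟨fun h t => hoi _ (h t) _ (by simp [add_assoc]), fun h t => ?_⟩
  simpa [single_add, add_comm, add_left_comm] using h (t + 1)

end Towers

section Supports

variable {m : Mono} {i n : ℕ}

theorem support_subset_Icc_succ (hm : m.support ⊆ Finset.Icc i n) (hmi : m i = 0) :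
    m.support ⊆ Finset.Icc (i + 1) n := by
  intro a ha
  have hai : a ≠ i := by rintro rfl; exact (mem_support_iff.mp ha) hmi
  have := Finset.mem_Icc.mp (hm ha)
  exact Finset.mem_Icc.mpr ⟨by omega, this.2⟩

theorem support_single_add_subset_Icc (hin : i ≤ n) (hm : m.support ⊆ Finset.Icc i n) :
    (single i 1 + m).support ⊆ Finset.Icc i n := by
  classical
  refine (support_add).trans (Finset.union_subset ?_ hm)
  rw [support_single _ one_ne_zero, Finset.singleton_subset_iff]
  exact Finset.mem_Icc.mpr ⟨le_rfl, hin⟩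

theorem disjoint_support_subset_Icc_succ_range_single_add :
    Disjoint {m : Mono | m.support ⊆ Finset.Icc (i + 1) n}
      (Set.range fun m : Mono => single i 1 + m) := by
  rw [Set.disjoint_left]
  rintro _ hsupp ⟨m, rfl⟩
  have : i ∈ (single i 1 + m).support := by simp
  simpa using hsupp this

end Supports

section Decomposition

variable {n : ℕ} {B : Set Mono}

theorem Cset_eq (hsh : ShiftedSet B) (j : ℕ) :
    Cset B n j = {m | m ∈ B ∧ m.support ⊆ Finset.Icc (j + 1) n ∧ VarTower B m (j + 1)} := by
  ext m
  refine ⟨fun ⟨hmB, hsupp, hA⟩ => ⟨hmB, hsupp, ?_⟩, fun ⟨hmB, hsupp, hT⟩ => ⟨hmB, hsupp, ?_⟩⟩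
  · suffices ∀ k ≤ j + 1, VarTower B m k from this (j + 1) le_rfl
    intro k
    induction k with
    | zero => intro _; simpa [VarTower] using hmB
    | succ k ih =>
      intro hk
      have hnotA : m ∉ Aset B n k := hA k (by omega)
      simp only [Aset, Set.mem_ofPred_eq, not_and, not_not] at hnotA
      exact hnotA (hsupp.trans (Finset.Icc_subset_Icc (by omega) le_rfl)) (ih (by omega))
  · exact fun k hk hA => hA.2.2 (hT.of_le hsh (by omega) (by omega))

theorem Cset_pred_eq (hsh : ShiftedSet B) {i : ℕ} (hi : 1 ≤ i) :
    Cset B n (i - 1) = {m | m.support ⊆ Finset.Icc i n ∧ VarTower B m i} := by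
  rw [Cset_eq hsh, Nat.sub_add_cancel hi]
  ext m
  exact ⟨fun h => h.2, fun h => ⟨h.2.mem (by omega), h⟩⟩

theorem Cset_pred_eq_union (hsh : ShiftedSet B) (hoi : IsOrderIdeal B) (hsupp : SupportedIn B n)
    {i : ℕ} (hi : 1 ≤ i) :
    Cset B n (i - 1) =
      Aset B n i ∪ Cset B n i ∪ (fun m => single i 1 + m) '' Cset B n (i - 1) := by
  have hi0 : i ≠ 0 := by omega
  rw [Cset_eq hsh i, Cset_pred_eq hsh hi]
  ext m
  constructor
  · rintro ⟨hm, hT⟩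
    by_cases hmi : m i = 0
    · have hm' := support_subset_Icc_succ hm hmi
      by_cases hT' : VarTower B m (i + 1)
      · exact Or.inl (Or.inr ⟨hT.mem hi0, hm', hT'⟩)
      · exact Or.inl (Or.inl ⟨hm', hT, hT'⟩)
    · have hdiv : single i 1 + (m - single i 1) = m :=
        add_tsub_cancel_of_le (single_le_iff.mpr (Nat.one_le_iff_ne_zero.mpr hmi))
      refine Or.inr ⟨m - single i 1, ⟨(support_mono tsub_le_self).trans hm, ?_⟩, hdiv⟩
      rw [← varTower_single_add_iff hoi hi0, hdiv]
      exact hT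
  · rintro ((hA | ⟨hmB, hm, hT⟩) | ⟨m, ⟨hm, hT⟩, rfl⟩)
    · exact ⟨hA.1.trans (Finset.Icc_subset_Icc (by omega) le_rfl), hA.2.1⟩
    · exact ⟨hm.trans (Finset.Icc_subset_Icc (by omega) le_rfl), hT.of_le hsh hi (by omega)⟩
    · have hT' := (varTower_single_add_iff hoi hi0).mpr hT
      have hin : i ≤ n := by
        have := hsupp _ (hT'.mem hi0) (show i ∈ (single i 1 + m).support by simp)
        exact (Finset.mem_Icc.mp this).2
      exact ⟨support_single_add_subset_Icc hin hm, hT'⟩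

end Decomposition

/-- For a shifted order ideal `B ⊆ ℕ^[n]`:
`C_i = { m ∈ B ∩ ℕ^[i+1,n] : m·ℕ^{i+1} ⊆ B }`, and `C_{i-1}` is the disjoint
union `A_i ⊔ C_i ⊔ y_i·C_{i-1}`. -/
theorem Cset_char_and_decomposition
    (n : ℕ) (B : Set Mono) (h1 : ShiftedSet B) (h2 : IsOrderIdeal B)
    (h3 : SupportedIn B n) (i : ℕ) (hi : 1 ≤ i) :
    (∀ j : ℕ, Cset B n j =
        { m | m ∈ B ∧ m.support ⊆ Finset.Icc (j + 1) n ∧ VarTower B m (j + 1) }) ∧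
    Cset B n (i - 1) =
      Aset B n i ∪ Cset B n i ∪ (fun m => Finsupp.single i 1 + m) '' Cset B n (i - 1) ∧
    Disjoint (Aset B n i) (Cset B n i) ∧
    Disjoint (Aset B n i) ((fun m => Finsupp.single i 1 + m) '' Cset B n (i - 1)) ∧
    Disjoint (Cset B n i) ((fun m => Finsupp.single i 1 + m) '' Cset B n (i - 1)) := by
  have hdisj := disjoint_support_subset_Icc_succ_range_single_add (i := i) (n := n)
  refine ⟨Cset_eq h1, Cset_pred_eq_union h1 h2 h3 hi, ?_,
    hdisj.mono (fun _ hm => hm.1) (Set.image_subset_range _ _),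
    hdisj.mono (fun _ hm => hm.2.1) (Set.image_subset_range _ _)⟩
  rw [Set.disjoint_left, Cset_eq h1]
  exact fun _ hA hC => hA.2.2 hC.2.2
end

section
/- Let B ⊆ ℕ^[n] be a shifted order ideal of monomials, with A_i and C_i defined as follows: A_i = { m ∈ ℕ^[i+1,n] : m·ℕ^{i} ⊆ B, m·ℕ^{i+1} ⊄ B }, C_i = { m ∈ B ∩ ℕ^[i+1,n] : m·ℕ^{i+1} ⊆ B }. Then both C_i and C_i ∪ A_i are shifted order ideals inside ℕ^[i+1,n] (i.e., closed under divisibility, and closed under replacing y_s by y_r for i+1 ≤ r < s). -/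
/-- `C_i = { m ∈ B ∩ ℕ^[i+1,n] : m·ℕ^{i+1} ⊆ B }`. -/
def CsetChar (B : Set Mono) (n i : ℕ) : Set Mono :=
  { m | m ∈ B ∧ m.support ⊆ Finset.Icc (i + 1) n ∧ VarTower B m (i + 1) }

/-- `D` is shifted within `ℕ^[a,n]`: replacing a variable `y_s` by `y_r`
with `a ≤ r < s` stays in `D`. -/
def ShiftedAbove (D : Set Mono) (a : ℕ) : Prop :=
  ∀ (m : Mono) (r s : ℕ), a ≤ r → r < s →
    m + Finsupp.single s 1 ∈ D → m + Finsupp.single r 1 ∈ D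


lemma shift_pow {B : Set Mono} (h1 : ShiftedSet B) :
    ∀ (t : ℕ) (m : Mono) (r s : ℕ), 1 ≤ r → r < s →
      m + Finsupp.single s t ∈ B → m + Finsupp.single r t ∈ B := by
  intro t
  induction t with
  | zero => intro m r s _ _ h; simpa using h
  | succ t ih =>
    intro m r s hr hrs h
    have h' : (m + Finsupp.single s 1) + Finsupp.single s t ∈ B := by
      rw [add_assoc, ← Finsupp.single_add]; simpa [add_comm] using h
    have h2 := ih (m + Finsupp.single s 1) r s hr hrs h'
    have h3 : (m + Finsupp.single r t) + Finsupp.single s 1 ∈ B := by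
      rw [add_assoc, add_comm (Finsupp.single r t), ← add_assoc]; exact h2
    have h4 := h1 (m + Finsupp.single r t) s r hr hrs h3
    rw [add_assoc, ← Finsupp.single_add] at h4
    simpa [add_comm] using h4

lemma varTower_mono {B : Set Mono} (h2 : IsOrderIdeal B) {m m' : Mono} (hle : m' ≤ m)
    {k : ℕ} (h : VarTower B m k) : VarTower B m' k := by
  unfold VarTower at h ⊢
  split
  · exact h2 m (by simpa [*] using h) m' hle
  · rename_i hk
    rw [if_neg hk] at h
    exact fun t => h2 _ (h t) _ (add_le_add_left hle _)

lemma varTower_shift {B : Set Mono} (h1 : ShiftedSet B) {m : Mono} {r s k : ℕ}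
    (hr : 1 ≤ r) (hrs : r < s) (h : VarTower B (m + Finsupp.single s 1) k) :
    VarTower B (m + Finsupp.single r 1) k := by
  unfold VarTower at h ⊢
  split
  · exact h1 m s r hr hrs (by simpa [*] using h)
  · rename_i hk
    rw [if_neg hk] at h
    intro t
    have := h t
    rw [add_assoc, add_comm (Finsupp.single s 1)] at this
    rw [← add_assoc] at this
    have h5 := h1 (m + Finsupp.single k t) s r hr hrs this
    rw [add_assoc, add_comm (Finsupp.single r 1), ← add_assoc]
    exact h5

lemma supp_shift {m : Mono} {r s a n : ℕ} (hr : a ≤ r) (hrs : r < s)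
    (h : (m + Finsupp.single s 1).support ⊆ Finset.Icc a n) :
    (m + Finsupp.single r 1).support ⊆ Finset.Icc a n := by
  have hsmem : s ∈ (m + Finsupp.single s 1).support := by
    simp [Finsupp.mem_support_iff]
  have hsn : s ≤ n := (Finset.mem_Icc.mp (h hsmem)).2
  intro x hx
  rcases Finset.mem_union.mp (Finsupp.support_add hx) with hx | hx
  · have : x ∈ (m + Finsupp.single s 1).support := by
      rw [Finsupp.mem_support_iff] at hx ⊢
      simp [Finsupp.add_apply]
      omega
    exact h this
  · have : x = r := by simpa using Finsupp.support_single_subset hx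
    subst this
    exact Finset.mem_Icc.mpr ⟨hr, le_of_lt (lt_of_lt_of_le hrs hsn)⟩

lemma union_char (B : Set Mono) (h1 : ShiftedSet B) (h2 : IsOrderIdeal B) (n i : ℕ) :
    CsetChar B n i ∪ Aset B n i =
      { m | m.support ⊆ Finset.Icc (i + 1) n ∧ VarTower B m i } := by
  ext m
  constructor
  · rintro (⟨hB, hs, ht⟩ | ⟨hs, ht, _⟩)
    · refine ⟨hs, ?_⟩
      unfold VarTower at ht ⊢
      split
      · exact hB
      · rename_i hi
        rw [if_neg (by simp)] at ht
        intro t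
        exact shift_pow h1 t m i (i + 1) (Nat.one_le_iff_ne_zero.mpr hi) (Nat.lt_succ_self i) (ht t)
    · exact ⟨hs, ht⟩
  · rintro ⟨hs, ht⟩
    by_cases hT : VarTower B m (i + 1)
    · left
      refine ⟨?_, hs, hT⟩
      unfold VarTower at ht
      split at ht
      · exact ht
      · simpa using ht 0
    · right; exact ⟨hs, ht, hT⟩

/-- For a shifted order ideal `B ⊆ ℕ^[n]`, both `C_i` and `C_i ∪ A_i` are
shifted order ideals inside `ℕ^[i+1,n]`. -/
theorem Cset_and_union_shifted_order_ideals
    (n : ℕ) (B : Set Mono) (h1 : ShiftedSet B) (h2 : IsOrderIdeal B)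
    (h3 : SupportedIn B n) (i : ℕ) :
    IsOrderIdeal (CsetChar B n i) ∧ ShiftedAbove (CsetChar B n i) (i + 1) ∧
    IsOrderIdeal (CsetChar B n i ∪ Aset B n i) ∧
    ShiftedAbove (CsetChar B n i ∪ Aset B n i) (i + 1) := by
  have hsupp : ∀ {m m' : Mono}, m' ≤ m → m'.support ⊆ m.support := by
    intro m m' hle x hx
    rw [Finsupp.mem_support_iff] at hx ⊢
    exact fun h0 => hx (Nat.le_zero.mp (h0 ▸ hle x))
  refine ⟨?_, ?_, ?_, ?_⟩
  · rintro m ⟨hB, hs, ht⟩ m' hle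
    exact ⟨h2 m hB m' hle, (hsupp hle).trans hs, varTower_mono h2 hle ht⟩
  · rintro m r s hr hrs ⟨hB, hs, ht⟩
    exact ⟨h1 m s r (le_trans (Nat.le_add_left 1 i) hr) hrs hB, supp_shift hr hrs hs,
      varTower_shift h1 (le_trans (Nat.le_add_left 1 i) hr) hrs ht⟩
  · rw [union_char B h1 h2 n i]
    rintro m ⟨hs, ht⟩ m' hle
    exact ⟨(hsupp hle).trans hs, varTower_mono h2 hle ht⟩
  · rw [union_char B h1 h2 n i]
    rintro m r s hr hrs ⟨hs, ht⟩
    exact ⟨supp_shift hr hrs hs,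
      varTower_shift h1 (le_trans (Nat.le_add_left 1 i) hr) hrs ht⟩
end

section
/- Let B ⊆ ℕ^[n] be a strongly-stable-complement: B is an order ideal of monomials such that if j < i and y_i m ∈ B then y_j m ∈ B. Suppose additionally B satisfies (B4): m ∈ B ∩ ℕ^[k,n] of degree ≥ k implies m·ℕ^{k} ⊆ B. Then every standard pair of the complement is of the form m·ℕ^[i] with deg(m) ≤ i. -/
/-!
Maximality of a standard pair `m·ℕ^σ` means that no variable `y_j` with `j ∉ σ` can be adjoined:
`m·ℕ^(σ ∪ {j}) ⊄ B`. Shiftedness lets one trade a power `y_i^d` for any monomial of degree `d` in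
the variables `y_1, …, y_{i-1}`. If `j < i ∈ σ`, this trade gives `m·ℕ^(σ ∪ {j}) ⊆ B`, so `σ` is an
initial interval `[k]`. If moreover `deg m > k`, then (B4) gives `m·ℕ^{k+1} ⊆ B`, and the same trade
yields `m·ℕ^[k+1] ⊆ B`, again contradicting maximality.
-/

open Finsupp

lemma mdeg_add (a b : Mono) : mdeg (a + b) = mdeg a + mdeg b :=
  map_add Finsupp.degree a b

lemma mdeg_single (i d : ℕ) : mdeg (single i d) = d :=
  Finsupp.degree_single i d

namespace ShiftedSet

variable {B : Set Mono}

lemma add_single_mem_of_lt_s13 (hB : ShiftedSet B) {i j : ℕ} (hj : 1 ≤ j) (hji : j < i)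
    {u : Mono} {d : ℕ} (h : u + single i d ∈ B) : u + single j d ∈ B := by
  induction d generalizing u with
  | zero => simpa using h
  | succ d ih =>
    have hj1 : u + single i d + single j 1 ∈ B :=
      hB _ i j hj hji (by rwa [add_assoc, ← single_add])
    rw [add_right_comm] at hj1
    simpa only [add_assoc, ← single_add, add_comm 1 d] using ih hj1

lemma add_mem_of_add_single_mdeg_mem (hB : ShiftedSet B) {i : ℕ} {s : Mono}
    (hs : s.support ⊆ Finset.Ico 1 i) {u : Mono} (h : u + single i (mdeg s) ∈ B) :
    u + s ∈ B := by
  induction s using Finsupp.induction_linear generalizing u with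
  | zero => simpa [mdeg] using h
  | add f g ihf ihg =>
    have hf : f.support ⊆ Finset.Ico 1 i := (support_mono le_self_add).trans hs
    have hg : g.support ⊆ Finset.Ico 1 i := (support_mono le_add_self).trans hs
    rw [mdeg_add, single_add, ← add_assoc] at h
    have hug := ihg hg h
    rw [add_right_comm] at hug
    simpa only [add_assoc, add_comm g f] using ihf hf hug
  | single a b =>
    rw [mdeg_single] at h
    by_cases hb : b = 0
    · simpa [hb] using h
    · have ha : a ∈ Finset.Ico 1 i := hs (by simp [hb])
      rw [Finset.mem_Ico] at ha
      exact hB.add_single_mem_of_lt_s13 ha.1 ha.2 h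

end ShiftedSet

lemma Finset.eq_Icc_one_card {s : Finset ℕ} (hpos : ∀ i ∈ s, 1 ≤ i)
    (hdown : ∀ i ∈ s, ∀ j, 1 ≤ j → j < i → j ∈ s) : s = Finset.Icc 1 s.card := by
  suffices hs : s = Finset.Icc 1 (s.sup id) by
    conv_rhs => rw [hs, Nat.card_Icc, Nat.add_sub_cancel]
    exact hs
  apply le_antisymm
  · intro i hi
    exact Finset.mem_Icc.2 ⟨hpos i hi, Finset.le_sup (f := id) hi⟩
  · intro j hj
    rw [Finset.mem_Icc] at hj
    obtain ⟨i, hi, hmax⟩ := Finset.exists_mem_eq_sup s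
      (Finset.nonempty_iff_ne_empty.2 (by rintro rfl; simp at hj; omega)) id
    rw [hmax, id] at hj
    rcases hj.2.lt_or_eq with hlt | rfl
    · exact hdown i hi j hj.1 hlt
    · exact hi

lemma pairSet_insert_subset {B : Set Mono} {m : Mono} {σ : Finset ℕ} {j : ℕ}
    (h : ∀ t : Mono, t.support ⊆ σ → ∀ c : ℕ, m + t + single j c ∈ B) :
    pairSet m (insert j σ) ⊆ B := by
  rintro _ ⟨t, ht, rfl⟩
  rw [← erase_add_single j t, ← add_assoc]
  exact h _ (by rw [support_erase, ← Finset.subset_insert_iff]; exact ht) _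

namespace IsStandardPair

variable {n : ℕ} {B : Set Mono} {m : Mono} {σ : Finset ℕ}

lemma add_mem (h : IsStandardPair B m σ) {t : Mono} (ht : t.support ⊆ σ) : m + t ∈ B :=
  h.1.2 ⟨t, ht, rfl⟩

/-- Otherwise `(m.erase j)·ℕ^(σ ∪ {j})` would be an admissible pair strictly containing `m·ℕ^σ`:
it contains `m.erase j · y_j^(m j + 1)`. -/
lemma not_pairSet_insert_subset (hB : IsOrderIdeal B) (h : IsStandardPair B m σ)
    {j : ℕ} (hj : j ∉ σ) : ¬ pairSet m (insert j σ) ⊆ B := by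
  intro hsub
  have hadm : Admissible B (m.erase j) (insert j σ) := by
    refine ⟨?_, ?_⟩
    · rw [support_erase, Finset.disjoint_insert_right]
      exact ⟨Finset.notMem_erase j _,
        Finset.disjoint_of_subset_left (Finset.erase_subset _ _) h.1.1⟩
    · rintro _ ⟨t, ht, rfl⟩
      have hle : m.erase j ≤ m := le_self_add.trans_eq (erase_add_single j m)
      exact hB _ (hsub ⟨t, ht, rfl⟩) _ (add_le_add_left hle t)
  have hle : pairSet m σ ⊆ pairSet (m.erase j) (insert j σ) := by
    rintro _ ⟨t, ht, rfl⟩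
    refine ⟨single j (m j) + t, ?_, by rw [← add_assoc, erase_add_single]⟩
    exact support_add.trans (Finset.union_subset
      (support_single_subset.trans (by simp)) (ht.trans (Finset.subset_insert _ _)))
  have hwit : m.erase j + single j (m j + 1) ∈ pairSet m σ := by
    rw [h.2 _ _ hadm hle]
    exact ⟨_, support_single_subset.trans (by simp), rfl⟩
  obtain ⟨t, ht, hte⟩ := hwit
  have htj : t j = 0 := notMem_support_iff.1 fun hmem => hj (ht hmem)
  simpa [htj] using congrArg (· j) hte

lemma one_le_of_mem (h3 : SupportedIn B n) (h : IsStandardPair B m σ) {i : ℕ}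
    (hi : i ∈ σ) : 1 ≤ i := by
  have hmem : i ∈ (m + single i 1).support := by simp
  exact (Finset.mem_Icc.1 (h3 _ (h.add_mem (by simpa using hi)) hmem)).1

lemma mem_of_lt_of_mem (h1 : ShiftedSet B) (h2 : IsOrderIdeal B) (h : IsStandardPair B m σ)
    {i j : ℕ} (hi : i ∈ σ) (hj : 1 ≤ j) (hji : j < i) : j ∈ σ := by
  by_contra hjσ
  refine h.not_pairSet_insert_subset h2 hjσ (pairSet_insert_subset fun t ht c => ?_)
  refine h1.add_single_mem_of_lt_s13 hj hji ?_
  rw [add_assoc]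
  exact h.add_mem (support_add.trans
    (Finset.union_subset ht (support_single_subset.trans (by simpa))))

lemma mdeg_le_of_eq_Icc (h1 : ShiftedSet B) (h2 : IsOrderIdeal B) (h3 : SupportedIn B n)
    (h4 : HasB4 B n) (h : IsStandardPair B m σ) {k : ℕ} (hσ : σ = Finset.Icc 1 k) :
    mdeg m ≤ k := by
  by_contra! hdeg
  have hmB : m ∈ B := by simpa using h.add_mem (t := 0) (by simp)
  have hsupp : m.support ⊆ Finset.Icc (k + 1) n := by
    intro x hx
    have hxσ : x ∉ σ := Finset.disjoint_left.1 h.1.1 hx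
    have hx1n := Finset.mem_Icc.1 (h3 m hmB hx)
    simp only [hσ, Finset.mem_Icc, not_and, not_le] at hxσ
    exact Finset.mem_Icc.2 ⟨hxσ hx1n.1, hx1n.2⟩
  have htower := h4 (k + 1) m le_add_self hmB hsupp hdeg
  refine h.not_pairSet_insert_subset h2 (j := k + 1) (by simp [hσ])
    (pairSet_insert_subset fun t ht c => ?_)
  rw [add_right_comm]
  refine h1.add_mem_of_add_single_mdeg_mem (ht.trans (hσ ▸ Finset.Icc_subset_Ico_right
    (Nat.lt_succ_self k))) ?_
  rw [add_assoc, ← single_add]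
  exact htower _

end IsStandardPair

/-- For a shifted order ideal `B ⊆ ℕ^[n]` with property (B4), every standard
pair is of the form `m·ℕ^[i]` with `deg m ≤ i`; equivalently `σ = {1,...,|σ|}`
and `deg m ≤ |σ|`. -/
theorem standardPair_initial_interval_deg_le
    (n : ℕ) (B : Set Mono) (h1 : ShiftedSet B) (h2 : IsOrderIdeal B)
    (h3 : SupportedIn B n) (h4 : HasB4 B n) (m : Mono) (σ : Finset ℕ)
    (h : IsStandardPair B m σ) :
    σ = Finset.Icc 1 σ.card ∧ mdeg m ≤ σ.card := by
  have hσ : σ = Finset.Icc 1 σ.card :=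
    Finset.eq_Icc_one_card (fun _ hi => h.one_le_of_mem h3 hi)
      (fun _ hi _ hj hji => h.mem_of_lt_of_mem h1 h2 hi hj hji)
  exact ⟨hσ, h.mdeg_le_of_eq_Icc h1 h2 h3 h4 hσ⟩
end

section
/- Let Γ be a simplicial complex on [n] with f-triangle entries f_{i,j}(Γ) = |{ F ∈ Γ : |F| = j, dim(st F) = i−1 }| and h-triangle h_{i,j}(Γ) = Σ_{s=0}^{j} (−1)^{j−s} C(i−s, j−s) f_{i,s}(Γ). If K is a shifted simplicial complex, then h_{i,j}(K) = |{ F ∈ max(K) : |F| = i, [i−j] ⊆ F, i−j+1 ∉ F }|, i.e., the h-triangle of a shifted complex counts facets of size i containing the initial segment [i−j] but not i−j+1. -/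
open scoped Classical

/-- `f_{i,j}(K) = |{ F ∈ K : |F| = j, dim(st F) = i−1 }|`, where
`st F = { G ∈ K : G ∪ F ∈ K }` and the condition `dim(st F) = i−1` is expressed
as: the maximal cardinality of a face of `st F` is `i`. -/
noncomputable def fTri (K : Finset (Finset ℕ)) (i j : ℕ) : ℕ :=
  (K.filter fun F => F.card = j ∧
    (K.filter fun G => G ∪ F ∈ K).sup Finset.card = i).card

/-- `h_{i,j}(K) = Σ_{s=0}^{j} (−1)^{j−s} C(i−s, j−s) f_{i,s}(K)`. -/
noncomputable def hTri (K : Finset (Finset ℕ)) (i j : ℕ) : ℤ :=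
  ∑ s ∈ Finset.range (j + 1),
    (-1 : ℤ) ^ (j - s) * (Nat.choose (i - s) (j - s)) * (fTri K i s)

open Finset

/-- The maximum cardinality of a face of `K` containing `F`. -/
noncomputable def mstar (K : Finset (Finset ℕ)) (F : Finset ℕ) : ℕ :=
  (K.filter fun G => F ⊆ G).sup Finset.card

/-- `T` is a compressed superset of `F`: outside of `F`, it uses the smallest
possible positive integers. -/
def compr (F T : Finset ℕ) : Prop :=
  F ⊆ T ∧ ∀ x y : ℕ, 1 ≤ x → x < y → x ∉ T → y ∈ T → y ∈ F

lemma sup_star_eq (K : Finset (Finset ℕ)) (F : Finset ℕ) :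
    (K.filter fun G => G ∪ F ∈ K).sup Finset.card = mstar K F := by
  apply le_antisymm
  · apply Finset.sup_le
    intro G hG
    rw [Finset.mem_filter] at hG
    calc G.card ≤ (G ∪ F).card := Finset.card_le_card Finset.subset_union_left
    _ ≤ _ := Finset.le_sup (f := Finset.card)
        (Finset.mem_filter.mpr ⟨hG.2, Finset.subset_union_right⟩)
  · apply Finset.sup_le
    intro H hH
    rw [Finset.mem_filter] at hH
    refine Finset.le_sup (f := Finset.card) (Finset.mem_filter.mpr ⟨hH.1, ?_⟩)
    rw [Finset.union_eq_left.mpr hH.2]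
    exact hH.1

lemma exists_compr (K : Finset (Finset ℕ))
    (hs : ∀ F ∈ K, ∀ i ∈ F, ∀ j : ℕ, 1 ≤ j → j < i → insert j (F.erase i) ∈ K) :
    ∀ N : ℕ, ∀ H ∈ K, ∑ z ∈ H, z ≤ N → ∀ F ⊆ H, ∃ T ∈ K, compr F T ∧ T.card = H.card := by
  intro N
  induction N with
  | zero =>
    intro H hH hsum F hFH
    by_cases hcpr : compr F H
    · exact ⟨H, hH, hcpr, rfl⟩
    · exfalso
      rw [compr, not_and] at hcpr
      push_neg at hcpr
      obtain ⟨x, y, hx1, hxy, hxH, hyH, hyF⟩ := hcpr hFH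
      have : y ≤ ∑ z ∈ H, z := Finset.single_le_sum (f := fun z => z) (fun i _ => Nat.zero_le i) hyH
      omega
  | succ N ih =>
    intro H hH hsum F hFH
    by_cases hcpr : compr F H
    · exact ⟨H, hH, hcpr, rfl⟩
    · rw [compr, not_and] at hcpr
      push_neg at hcpr
      obtain ⟨x, y, hx1, hxy, hxH, hyH, hyF⟩ := hcpr hFH
      have hH' : insert x (H.erase y) ∈ K := hs H hH y hyH x hx1 hxy
      have hxe : x ∉ H.erase y := fun h => hxH (Finset.mem_of_mem_erase h)
      have hcard : (insert x (H.erase y)).card = H.card := by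
        rw [Finset.card_insert_of_notMem hxe, Finset.card_erase_of_mem hyH]
        have : 0 < H.card := Finset.card_pos.mpr ⟨y, hyH⟩
        omega
      have hFsub : F ⊆ insert x (H.erase y) := by
        intro z hz
        have hzH : z ∈ H := hFH hz
        have hzy : z ≠ y := fun e => hyF (e ▸ hz)
        exact Finset.mem_insert_of_mem (Finset.mem_erase.mpr ⟨hzy, hzH⟩)
      have hysum : y ≤ ∑ z ∈ H, z := Finset.single_le_sum (f := fun z => z) (fun i _ => Nat.zero_le i) hyH
      have hsum' : ∑ z ∈ insert x (H.erase y), z ≤ N := by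
        rw [Finset.sum_insert hxe]
        have herase : ∑ z ∈ H.erase y, z + y = ∑ z ∈ H, z :=
          Finset.sum_erase_add H (fun z => z) hyH
        omega
      obtain ⟨T, hT, hcT, hcardT⟩ := ih (insert x (H.erase y)) hH' hsum' F hFsub
      exact ⟨T, hT, hcT, by rw [hcardT, hcard]⟩

lemma compr_comparable {F T T' : Finset ℕ} (hT : ∀ y ∈ T, 1 ≤ y) (hT' : ∀ y ∈ T', 1 ≤ y)
    (h : compr F T) (h' : compr F T') : T ⊆ T' ∨ T' ⊆ T := by
  by_contra hc
  push_neg at hc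
  obtain ⟨y, hyT, hyT'⟩ := Finset.not_subset.mp hc.1
  obtain ⟨z, hzT', hzT⟩ := Finset.not_subset.mp hc.2
  rcases lt_trichotomy y z with hlt | heq | hlt
  · exact hzT (h.1 (h'.2 y z (hT y hyT) hlt hyT' hzT'))
  · exact hzT (heq ▸ hyT)
  · exact hyT' (h'.1 (h.2 z y (hT' z hzT') hlt hzT hyT))

lemma compr_unique {F T T' : Finset ℕ} (hT : ∀ y ∈ T, 1 ≤ y) (hT' : ∀ y ∈ T', 1 ≤ y)
    (h : compr F T) (h' : compr F T') (hcard : T.card = T'.card) : T = T' := by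
  rcases compr_comparable hT hT' h h' with hsub | hsub
  · exact Finset.eq_of_subset_of_card_le hsub hcard.symm.le
  · exact (Finset.eq_of_subset_of_card_le hsub hcard.le).symm

/-- The canonical facet associated with a face `F`. -/
noncomputable def phiK (K : Finset (Finset ℕ)) (F : Finset ℕ) : Finset ℕ :=
  if h : ∃ T, T ∈ K ∧ compr F T ∧ T.card = mstar K F then h.choose else ∅

lemma pos_of_mem {n : ℕ} {K : Finset (Finset ℕ)}
    (hc1 : ∀ F ∈ K, F ⊆ Finset.Icc 1 n) {T : Finset ℕ} (hT : T ∈ K) :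
    ∀ y ∈ T, 1 ≤ y := fun y hy => (Finset.mem_Icc.mp (hc1 T hT hy)).1

lemma le_mstar {K : Finset (Finset ℕ)} {F H : Finset ℕ} (hH : H ∈ K) (hFH : F ⊆ H) :
    H.card ≤ mstar K F :=
  Finset.le_sup (f := Finset.card) (Finset.mem_filter.mpr ⟨hH, hFH⟩)

lemma phiK_spec {K : Finset (Finset ℕ)}
    (hs : ∀ F ∈ K, ∀ i ∈ F, ∀ j : ℕ, 1 ≤ j → j < i → insert j (F.erase i) ∈ K)
    {F : Finset ℕ} (hF : F ∈ K) :
    phiK K F ∈ K ∧ compr F (phiK K F) ∧ (phiK K F).card = mstar K F := by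
  have hex : ∃ T, T ∈ K ∧ compr F T ∧ T.card = mstar K F := by
    obtain ⟨H, hH, hHc⟩ := Finset.exists_mem_eq_sup (K.filter fun G => F ⊆ G)
      ⟨F, Finset.mem_filter.mpr ⟨hF, subset_rfl⟩⟩ Finset.card
    rw [Finset.mem_filter] at hH
    obtain ⟨T, hT, hcT, hcard⟩ := exists_compr K hs (∑ z ∈ H, z) H hH.1 le_rfl F hH.2
    exact ⟨T, hT, hcT, by rw [hcard, mstar, hHc]⟩
  rw [phiK, dif_pos hex]
  exact hex.choose_spec

lemma phiK_isFacet {n : ℕ} {K : Finset (Finset ℕ)}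
    (hc1 : ∀ F ∈ K, F ⊆ Finset.Icc 1 n)
    (hs : ∀ F ∈ K, ∀ i ∈ F, ∀ j : ℕ, 1 ≤ j → j < i → insert j (F.erase i) ∈ K)
    {F : Finset ℕ} (hF : F ∈ K) :
    ∀ G ∈ K, phiK K F ⊆ G → phiK K F = G := by
  obtain ⟨hTK, hTc, hTcard⟩ := phiK_spec hs hF
  intro G hG hsub
  apply Finset.eq_of_subset_of_card_le hsub
  rw [hTcard]
  exact le_mstar hG (hTc.1.trans hsub)

lemma phiK_of_facet {n : ℕ} {K : Finset (Finset ℕ)}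
    (hc1 : ∀ F ∈ K, F ⊆ Finset.Icc 1 n)
    (hs : ∀ F ∈ K, ∀ i ∈ F, ∀ j : ℕ, 1 ≤ j → j < i → insert j (F.erase i) ∈ K)
    {F M : Finset ℕ} (hF : F ∈ K) (hM : M ∈ K) (hcpr : compr F M)
    (hfac : ∀ G ∈ K, M ⊆ G → M = G) :
    phiK K F = M ∧ mstar K F = M.card := by
  obtain ⟨hTK, hTc, hTcard⟩ := phiK_spec hs hF
  have h1 : M.card ≤ mstar K F := le_mstar hM hcpr.1
  rcases compr_comparable (pos_of_mem hc1 hTK) (pos_of_mem hc1 hM) hTc hcpr with hsub | hsub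
  · have heq : phiK K F = M := Finset.eq_of_subset_of_card_le hsub (by rw [hTcard]; exact h1)
    exact ⟨heq, by rw [← hTcard, heq]⟩
  · have heq : M = phiK K F := hfac _ hTK hsub
    exact ⟨heq.symm, by rw [← hTcard, ← heq]⟩

lemma count_between {B M : Finset ℕ} (hBM : B ⊆ M) (s : ℕ) :
    (M.powerset.filter (fun F => B ⊆ F ∧ F.card = s)).card
      = if B.card ≤ s then Nat.choose (M.card - B.card) (s - B.card) else 0 := by
  split_ifs with h
  · rw [← Finset.card_sdiff_of_subset hBM, ← Finset.card_powersetCard]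
    apply Finset.card_bij' (fun F _ => F \ B) (fun S _ => S ∪ B)
    · intro F hF
      rw [Finset.mem_filter, Finset.mem_powerset] at hF
      obtain ⟨hFM, hBF, hFs⟩ := hF
      rw [Finset.mem_powersetCard]
      exact ⟨Finset.sdiff_subset_sdiff hFM subset_rfl, by rw [Finset.card_sdiff_of_subset hBF, hFs]⟩
    · intro S hS
      rw [Finset.mem_powersetCard] at hS
      obtain ⟨hSM, hSc⟩ := hS
      have hdisj : Disjoint S B := Finset.disjoint_of_subset_left hSM Finset.sdiff_disjoint
      rw [Finset.mem_filter, Finset.mem_powerset]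
      refine ⟨Finset.union_subset (hSM.trans Finset.sdiff_subset) hBM, Finset.subset_union_right, ?_⟩
      rw [Finset.card_union_of_disjoint hdisj, hSc]
      omega
    · intro F hF
      rw [Finset.mem_filter, Finset.mem_powerset] at hF
      exact Finset.sdiff_union_of_subset hF.2.1
    · intro S hS
      rw [Finset.mem_powersetCard] at hS
      have hdisj : Disjoint S B := Finset.disjoint_of_subset_left hS.1 Finset.sdiff_disjoint
      rw [Finset.union_sdiff_right, Finset.sdiff_eq_self_of_disjoint hdisj]
  · rw [Finset.card_eq_zero, Finset.filter_eq_empty_iff]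
    rintro F hF ⟨hBF, hFs⟩
    exact h (hFs ▸ Finset.card_le_card hBF)

lemma exists_initseg {M : Finset ℕ} : ∃ a, Finset.Icc 1 a ⊆ M ∧ (a+1) ∉ M ∧ a ≤ M.card := by
  classical
  set S := (Finset.range (M.card + 1)).filter (fun t => Finset.Icc 1 t ⊆ M) with hS
  have h0 : 0 ∈ S := by simp [hS]
  set a := S.max' ⟨0, h0⟩ with ha
  have haS : a ∈ S := S.max'_mem _
  rw [hS, Finset.mem_filter, Finset.mem_range] at haS
  refine ⟨a, haS.2, ?_, by omega⟩
  intro hmem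
  have hsub : Finset.Icc 1 (a+1) ⊆ M := by
    intro z hz
    rw [Finset.mem_Icc] at hz
    rcases Nat.lt_or_ge z (a+1) with hlt | hge
    · exact haS.2 (Finset.mem_Icc.mpr ⟨hz.1, by omega⟩)
    · have : z = a + 1 := by omega
      exact this ▸ hmem
  have hcard : a + 1 ≤ M.card := by
    have := Finset.card_le_card hsub
    rwa [Nat.card_Icc, Nat.add_sub_cancel] at this
  have hmem' : a + 1 ∈ S := by
    rw [hS, Finset.mem_filter, Finset.mem_range]
    exact ⟨by omega, hsub⟩
  have := S.le_max' _ hmem'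
  rw [← ha] at this
  omega

lemma initseg_unique {M : Finset ℕ} {a b : ℕ} (haM : Finset.Icc 1 a ⊆ M) (ha : (a+1) ∉ M)
    (hbM : Finset.Icc 1 b ⊆ M) (hb : (b+1) ∉ M) : a = b := by
  by_contra hne
  rcases Nat.lt_or_ge a b with h' | h'
  · exact ha (hbM (Finset.mem_Icc.mpr ⟨by omega, by omega⟩))
  · exact hb (haM (Finset.mem_Icc.mpr ⟨by omega, by omega⟩))

lemma step1 (n : ℕ) (K : Finset (Finset ℕ))
    (hc1 : ∀ F ∈ K, F ⊆ Finset.Icc 1 n)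
    (hc2 : ∀ F ∈ K, ∀ G ⊆ F, G ∈ K)
    (hs : ∀ F ∈ K, ∀ i ∈ F, ∀ j : ℕ, 1 ≤ j → j < i → insert j (F.erase i) ∈ K)
    (i s : ℕ) (hsi : s ≤ i) :
    fTri K i s = ∑ m ∈ Finset.range (s+1), Nat.choose (i-m) (s-m) *
      (K.filter fun F => (∀ G ∈ K, F ⊆ G → F = G) ∧ F.card = i ∧
        Finset.Icc 1 (i-m) ⊆ F ∧ (i-m+1) ∉ F).card := by
  classical
  have e1 : fTri K i s = (K.filter fun F => F.card = s ∧ mstar K F = i).card := by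
    unfold fTri
    congr 1
    apply Finset.filter_congr
    intro F _
    rw [sup_star_eq K F]
  rw [e1]
  have hmap : ∀ F ∈ K.filter fun F => F.card = s ∧ mstar K F = i,
      phiK K F ∈ K.filter fun M => (∀ G ∈ K, M ⊆ G → M = G) ∧ M.card = i := by
    intro F hF
    rw [Finset.mem_filter] at hF
    obtain ⟨h1, _, h3⟩ := phiK_spec hs hF.1
    exact Finset.mem_filter.mpr ⟨h1, phiK_isFacet hc1 hs hF.1, by rw [h3, hF.2.2]⟩
  rw [Finset.card_eq_sum_card_fiberwise hmap]
  have fib : ∀ M ∈ K.filter fun M => (∀ G ∈ K, M ⊆ G → M = G) ∧ M.card = i,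
      ((K.filter fun F => F.card = s ∧ mstar K F = i).filter fun F => phiK K F = M).card
      = ∑ m ∈ Finset.range (s+1),
          if Finset.Icc 1 (i-m) ⊆ M ∧ (i-m+1) ∉ M then Nat.choose (i-m) (s-m) else 0 := by
    intro M hM
    rw [Finset.mem_filter] at hM
    have hMK : M ∈ K := hM.1
    have hMmax := hM.2.1
    have hMcard := hM.2.2
    obtain ⟨a, haM, ha1, hale⟩ := exists_initseg (M := M)
    have hai : a ≤ i := hMcard ▸ hale
    set B := M.filter (fun y => ∃ x, 1 ≤ x ∧ x < y ∧ x ∉ M) with hB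
    have hBM : B ⊆ M := Finset.filter_subset _ _
    have hBeq : B = M \ Finset.Icc 1 a := by
      ext y
      simp only [hB, Finset.mem_filter, Finset.mem_sdiff, Finset.mem_Icc, not_and]
      constructor
      · rintro ⟨hyM, x, hx1, hxy, hxM⟩
        refine ⟨hyM, fun _ hya => hxM (haM (Finset.mem_Icc.mpr ⟨hx1, by omega⟩))⟩
      · rintro ⟨hyM, hya⟩
        have hy1 : 1 ≤ y := pos_of_mem hc1 hMK y hyM
        have hne : y ≠ a + 1 := fun e => ha1 (e ▸ hyM)
        have hgt : a < y := by
          by_contra hc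
          exact hya hy1 (by omega)
        exact ⟨hyM, a+1, by omega, by omega, ha1⟩
    have hBcard : B.card = i - a := by
      rw [hBeq, Finset.card_sdiff_of_subset haM, Nat.card_Icc, hMcard]
      omega
    have hfib : ((K.filter fun F => F.card = s ∧ mstar K F = i).filter fun F => phiK K F = M)
        = M.powerset.filter (fun F => B ⊆ F ∧ F.card = s) := by
      ext F
      simp only [Finset.mem_filter, Finset.mem_powerset]
      constructor
      · rintro ⟨⟨hFK, hFs, hFm⟩, hphi⟩
        have hcpr : compr F (phiK K F) := (phiK_spec hs hFK).2.1
        rw [hphi] at hcpr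
        refine ⟨hcpr.1, ?_, hFs⟩
        intro y hy
        rw [hB, Finset.mem_filter] at hy
        obtain ⟨x, hx1, hxy, hxM⟩ := hy.2
        exact hcpr.2 x y hx1 hxy hxM hy.1
      · rintro ⟨hFM, hBF, hFs⟩
        have hFK : F ∈ K := hc2 M hMK F hFM
        have hcpr : compr F M := by
          refine ⟨hFM, fun x y hx1 hxy hxM hyM => hBF ?_⟩
          rw [hB, Finset.mem_filter]
          exact ⟨hyM, x, hx1, hxy, hxM⟩
        obtain ⟨he1, he2⟩ := phiK_of_facet hc1 hs hFK hMK hcpr hMmax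
        exact ⟨⟨hFK, hFs, by rw [he2, hMcard]⟩, he1⟩
    rw [hfib, count_between hBM s, hBcard, hMcard]
    have hval : ∀ m ∈ Finset.range (s+1),
        (if Finset.Icc 1 (i-m) ⊆ M ∧ (i-m+1) ∉ M then Nat.choose (i-m) (s-m) else 0)
        = (if m = i - a then Nat.choose (i-m) (s-m) else 0) := by
      intro m hm
      rw [Finset.mem_range, Nat.lt_succ_iff] at hm
      congr 1
      apply propext
      constructor
      · rintro ⟨h1', h2'⟩
        have := initseg_unique h1' h2' haM ha1
        omega
      · intro h
        have he : i - m = a := by omega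
        rw [he]
        exact ⟨haM, ha1⟩
    rw [Finset.sum_congr rfl hval, Finset.sum_ite_eq' (Finset.range (s+1)) (i-a)]
    simp only [Finset.mem_range, Nat.lt_succ_iff]
  rw [Finset.sum_congr rfl fib, Finset.sum_comm]
  apply Finset.sum_congr rfl
  intro m _
  rw [Finset.sum_ite, Finset.sum_const, Finset.sum_const_zero, add_zero, smul_eq_mul,
    Finset.filter_filter, mul_comm]
  congr 1
  exact congrArg Finset.card (Finset.filter_congr (fun x _ => by tauto))

lemma alt_inner (a k : ℕ) (hka : k ≤ a) :
    ∑ t ∈ Finset.range (k+1), (-1:ℤ)^(k-t) * ((a-t).choose (k-t)) * (a.choose t)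
      = if k = 0 then 1 else 0 := by
  have key : ∀ t ∈ Finset.range (k+1),
      (-1:ℤ)^(k-t) * ((a-t).choose (k-t)) * (a.choose t)
        = (a.choose k : ℤ) * ((-1)^k * ((-1)^t * (k.choose t))) := by
    intro t ht
    rw [Finset.mem_range, Nat.lt_succ_iff] at ht
    have hmul : ((a.choose k : ℤ) * k.choose t) = (a.choose t) * ((a-t).choose (k-t)) := by
      exact_mod_cast Nat.choose_mul (n := a) ht
    have hsign : (-1:ℤ)^(k-t) = (-1)^k * (-1)^t := by
      rw [← pow_add, neg_one_pow_eq_pow_mod_two, neg_one_pow_eq_pow_mod_two (n := k + t)]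
      congr 1
      omega
    rw [hsign]
    linear_combination (-((-1:ℤ)^k * (-1)^t)) * hmul
  rw [Finset.sum_congr rfl key, ← Finset.mul_sum, ← Finset.mul_sum,
    Int.alternating_sum_range_choose]
  split_ifs with h
  · subst h; simp
  · simp

lemma step2 (i j : ℕ) (hji : j ≤ i) (N : ℕ → ℕ) :
    ∑ s ∈ Finset.range (j+1), (-1:ℤ)^(j-s) * (Nat.choose (i-s) (j-s)) *
      ((∑ m ∈ Finset.range (s+1), Nat.choose (i-m) (s-m) * N m : ℕ) : ℤ) = N j := by
  have hLHS : ∀ s ∈ Finset.range (j+1),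
      (-1:ℤ)^(j-s) * (Nat.choose (i-s) (j-s)) *
        ((∑ m ∈ Finset.range (s+1), Nat.choose (i-m) (s-m) * N m : ℕ) : ℤ)
      = ∑ m ∈ Finset.range (j+1), if m ≤ s then
          (-1:ℤ)^(j-s) * (Nat.choose (i-s) (j-s)) *
            ((Nat.choose (i-m) (s-m) : ℤ) * (N m : ℤ)) else 0 := by
    intro s hsr
    rw [Finset.mem_range, Nat.lt_succ_iff] at hsr
    have hfil : (Finset.range (j+1)).filter (fun m => m ≤ s) = Finset.range (s+1) := by
      ext x
      simp only [Finset.mem_filter, Finset.mem_range]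
      omega
    rw [← Finset.sum_filter, hfil]
    push_cast
    rw [Finset.mul_sum]
  rw [Finset.sum_congr rfl hLHS, Finset.sum_comm]
  have hm : ∀ m ∈ Finset.range (j+1),
      (∑ s ∈ Finset.range (j+1), if m ≤ s then
          (-1:ℤ)^(j-s) * (Nat.choose (i-s) (j-s)) *
            ((Nat.choose (i-m) (s-m) : ℤ) * (N m : ℤ)) else 0)
      = if m = j then (N m : ℤ) else 0 := by
    intro m hmr
    rw [Finset.mem_range, Nat.lt_succ_iff] at hmr
    have hfil : (Finset.range (j+1)).filter (fun s => m ≤ s) = Finset.Ico m (j+1) := by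
      ext x
      simp only [Finset.mem_filter, Finset.mem_range, Finset.mem_Ico]
      omega
    rw [← Finset.sum_filter, hfil, Finset.sum_Ico_eq_sum_range]
    have hlen : j + 1 - m = (j - m) + 1 := by omega
    rw [hlen]
    have hterm : ∀ t ∈ Finset.range ((j-m)+1),
        (-1:ℤ)^(j-(m+t)) * (Nat.choose (i-(m+t)) (j-(m+t))) *
          ((Nat.choose (i-m) ((m+t)-m) : ℤ) * (N m : ℤ))
        = ((-1:ℤ)^((j-m)-t) * (Nat.choose ((i-m)-t) ((j-m)-t)) * (Nat.choose (i-m) t))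
            * (N m : ℤ) := by
      intro t ht
      have h1 : j - (m+t) = (j-m) - t := by omega
      have h2 : i - (m+t) = (i-m) - t := by omega
      have h3 : (m+t) - m = t := by omega
      rw [h1, h2, h3]
      ring
    rw [Finset.sum_congr rfl hterm, ← Finset.sum_mul, alt_inner (i-m) (j-m) (by omega)]
    by_cases h : m = j
    · simp [h]
    · have h2 : j - m ≠ 0 := by omega
      simp [h, h2]
  rw [Finset.sum_congr rfl hm, Finset.sum_ite_eq' (Finset.range (j+1)) j]
  simp

/-- For a shifted simplicial complex `K` on `[n]`, the `h`-triangle counts facets: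
`h_{i,j}(K)` is the number of facets of size `i` containing `[i−j]` but not `i−j+1`. -/
theorem hTriangle_of_shifted_counts_facets
    (n : ℕ) (K : Finset (Finset ℕ))
    (hc1 : ∀ F ∈ K, F ⊆ Finset.Icc 1 n)
    (hc2 : ∀ F ∈ K, ∀ G ⊆ F, G ∈ K)
    (hs : ∀ F ∈ K, ∀ i ∈ F, ∀ j : ℕ, 1 ≤ j → j < i → insert j (F.erase i) ∈ K)
    (i j : ℕ) (hji : j ≤ i) :
    hTri K i j =
      ((K.filter fun F => (∀ G ∈ K, F ⊆ G → F = G) ∧ F.card = i ∧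
          Finset.Icc 1 (i - j) ⊆ F ∧ (i - j + 1) ∉ F).card : ℤ) := by
  unfold hTri
  have hrw : ∀ s ∈ Finset.range (j+1),
      (-1:ℤ)^(j-s) * (Nat.choose (i-s) (j-s)) * (fTri K i s)
      = (-1:ℤ)^(j-s) * (Nat.choose (i-s) (j-s)) *
        ((∑ m ∈ Finset.range (s+1), Nat.choose (i-m) (s-m) *
          (K.filter fun F => (∀ G ∈ K, F ⊆ G → F = G) ∧ F.card = i ∧
            Finset.Icc 1 (i-m) ⊆ F ∧ (i-m+1) ∉ F).card : ℕ) : ℤ) := by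
    intro s hsr
    rw [Finset.mem_range, Nat.lt_succ_iff] at hsr
    rw [step1 n K hc1 hc2 hs i s (hsr.trans hji)]
  rw [Finset.sum_congr rfl hrw]
  exact step2 i j hji (fun m => (K.filter fun F => (∀ G ∈ K, F ⊆ G → F = G) ∧ F.card = i ∧
    Finset.Icc 1 (i-m) ⊆ F ∧ (i-m+1) ∉ F).card)
end
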